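/- arXiv:2205.04967 — 8 statements merged into one kernel-verified Lean document; each statement's English description precedes it below -/
import Mathlib

section
/- Let q ∈ [0,∞) and let I = (I_1,...,I_n) be a random element of E_n with independent coordinates such that P(I_j = k) = q^k / (∑_{ℓ=0}^{j-1} q^ℓ) for 0 ≤ k ≤ j-1. Then Φ(I) is Mallows distributed with parameters n and q, i.e. P(Φ(I) = σ) = q^{Inv(σ)} / ∏_{k=1}^n (∑_{ℓ=0}^{k-1} q^ℓ) for every σ ∈ S_n. -/
open MeasureTheory ProbabilityTheory

/-- Total number of inversions of a permutation of `Fin n`. -/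
def InvCount (n : ℕ) (σ : Equiv.Perm (Fin n)) : ℕ :=
  (Finset.univ.filter (fun p : Fin n × Fin n => p.1 < p.2 ∧ σ p.2 < σ p.1)).card

/-- Number of inversions created by position `j`. -/
def Invj (n : ℕ) (j : Fin n) (σ : Equiv.Perm (Fin n)) : ℕ :=
  (Finset.univ.filter (fun i : Fin n => i < j ∧ σ j < σ i)).card

/-! Independence factors `P(∀ j, I_j = Inv_j σ)` into `∏_j P(I_j = Inv_j σ)`, which is legitimate
because `Inv_j σ ≤ j` lies in the support of `I_j`. The numerators then multiply to
`q ^ ∑_j Inv_j σ = q ^ Inv σ`, and the denominators to the Mallows normalising constant. -/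

lemma Invj_le (n : ℕ) (j : Fin n) (σ : Equiv.Perm (Fin n)) : Invj n j σ ≤ j :=
  calc Invj n j σ ≤ (Finset.Iio j).card :=
        Finset.card_le_card fun _ hi => Finset.mem_Iio.2 (Finset.mem_filter.1 hi).2.1
    _ = j := Fin.card_Iio j

lemma sum_Invj_eq_InvCount (n : ℕ) (σ : Equiv.Perm (Fin n)) :
    ∑ j, Invj n j σ = InvCount n σ := by
  simp only [Invj, InvCount, Finset.card_filter]
  rw [Fintype.sum_prod_type, Finset.sum_comm]

lemma ProbabilityTheory.iIndepFun.measure_forall_eq {ι Ω : Type*} [Fintype ι]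
    [MeasurableSpace Ω] {μ : Measure Ω} {β : ι → Type*} [∀ i, MeasurableSpace (β i)]
    [∀ i, MeasurableSingletonClass (β i)] {X : ∀ i, Ω → β i} (hX : iIndepFun X μ)
    (x : ∀ i, β i) :
    μ {ω | ∀ i, X i ω = x i} = ∏ i, μ {ω | X i ω = x i} := by
  have hset : {ω | ∀ i, X i ω = x i} = ⋂ i, X i ⁻¹' {x i} := by
    ext ω; simp
  rw [hset, hX.meas_iInter fun i => ⟨{x i}, measurableSet_singleton _, rfl⟩]
  rfl

theorem mallows_from_independent_inversions_general
    (n : ℕ) (q : ℝ) (hq : 0 ≤ q)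
    {Ω : Type*} [MeasurableSpace Ω] (P : Measure Ω)
    (I : Fin n → Ω → ℕ)
    (hindep : iIndepFun I P)
    (hmarg : ∀ (j : Fin n) (k : ℕ), k ≤ (j : ℕ) →
      P {ω | I j ω = k} = ENNReal.ofReal (q ^ k / ∑ ℓ ∈ Finset.range ((j : ℕ) + 1), q ^ ℓ))
    (σ : Equiv.Perm (Fin n)) :
    P {ω | ∀ j : Fin n, I j ω = Invj n j σ} =
      ENNReal.ofReal (q ^ InvCount n σ /
        ∏ k ∈ Finset.range n, ∑ ℓ ∈ Finset.range (k + 1), q ^ ℓ) := by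
  have hfactor_nonneg (j : Fin n) :
      0 ≤ q ^ Invj n j σ / ∑ ℓ ∈ Finset.range ((j : ℕ) + 1), q ^ ℓ :=
    div_nonneg (pow_nonneg hq _) (geom_sum_pos hq j.val.succ_ne_zero).le
  calc P {ω | ∀ j, I j ω = Invj n j σ}
      = ∏ j, P {ω | I j ω = Invj n j σ} := hindep.measure_forall_eq _
    _ = ∏ j : Fin n, ENNReal.ofReal
          (q ^ Invj n j σ / ∑ ℓ ∈ Finset.range ((j : ℕ) + 1), q ^ ℓ) :=
        Finset.prod_congr rfl fun j _ => hmarg j _ (Invj_le n j σ)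
    _ = ENNReal.ofReal (∏ j : Fin n,
          q ^ Invj n j σ / ∑ ℓ ∈ Finset.range ((j : ℕ) + 1), q ^ ℓ) :=
        (ENNReal.ofReal_prod_of_nonneg fun j _ => hfactor_nonneg j).symm
    _ = _ := by
        rw [Finset.prod_div_distrib, Finset.prod_pow_eq_pow_sum, sum_Invj_eq_InvCount,
          Fin.prod_univ_eq_prod_range (fun k => ∑ ℓ ∈ Finset.range (k + 1), q ^ ℓ)]

/-- If `I = (I_1, …, I_n)` has independent coordinates with
`P(I_j = k) = q^k / ∑_{ℓ<j} q^ℓ` for `0 ≤ k ≤ j-1`, then `Φ(I)` is Mallows distributed: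
since `Φ` is the bijection with `Inv_j (Φ I) = I_j`, the event `Φ(I) = σ` is
`{∀ j, I_j = Inv_j σ}` and has probability `q^{Inv σ} / ∏_{k=1}^n ∑_{ℓ<k} q^ℓ`. -/
theorem mallows_from_independent_inversions
    (n : ℕ) (q : ℝ) (hq : 0 ≤ q)
    {Ω : Type*} [MeasurableSpace Ω] (P : Measure Ω) [IsProbabilityMeasure P]
    (I : Fin n → Ω → ℕ) (hmeas : ∀ j, Measurable (I j))
    (hindep : iIndepFun I P)
    (hrange : ∀ j ω, I j ω ≤ (j : ℕ))
    (hmarg : ∀ (j : Fin n) (k : ℕ), k ≤ (j : ℕ) →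
      P {ω | I j ω = k} = ENNReal.ofReal (q ^ k / ∑ ℓ ∈ Finset.range ((j : ℕ) + 1), q ^ ℓ))
    (σ : Equiv.Perm (Fin n)) :
    P {ω | ∀ j : Fin n, I j ω = Invj n j σ} =
      ENNReal.ofReal (q ^ InvCount n σ /
        ∏ k ∈ Finset.range n, ∑ ℓ ∈ Finset.range (k + 1), q ^ ℓ) :=
  mallows_from_independent_inversions_general n q hq P I hindep hmarg σ
end

section
/- For j ∈ ℕ, 0 ≤ k ≤ j-2, and t ∈ [0,∞), the quantity (k+1)·∑_{ℓ=0}^{j-2}(ℓ+1)t^ℓ − j·∑_{ℓ=j-k-2}^{j-2}(ℓ−j+k+2)t^ℓ is nonnegative; consequently the birth rate p_j(t,k) defined as this quantity divided by ∑_{ℓ=0}^{j-1} t^ℓ is nonnegative. -/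
/-!
Put `n = j - k - 2`. After the shift `ℓ = n + m` the subtracted sum is `∑_{m ≤ k} m t^{n+m}`,
and the terms `ℓ = n + m` of the first sum already dominate it coefficientwise:
`(k + 1)(n + m + 1) - (n + k + 2) m = (n + 1)(k + 1 - m) ≥ 0`.
-/

/-- The infinitesimal birth rate `p_j(t,k)` of the birth Mallows process:
`p_j(t,k) = [(k+1)∑_{ℓ=0}^{j-2}(ℓ+1)t^ℓ − j∑_{ℓ=j-k-2}^{j-2}(ℓ−j+k+2)t^ℓ] / ∑_{ℓ=0}^{j-1} t^ℓ`.
The second sum is indexed over integers (its lowest index can be `-1`, where the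
coefficient vanishes). -/
noncomputable def pj (j k : ℕ) (t : ℝ) : ℝ :=
  (((k : ℝ) + 1) * ∑ ℓ ∈ Finset.range (j - 1), ((ℓ : ℝ) + 1) * t ^ ℓ
    - (j : ℝ) * ∑ ℓ ∈ Finset.Icc ((j : ℤ) - k - 2) ((j : ℤ) - 2),
        ((ℓ : ℝ) - (j : ℝ) + (k : ℝ) + 2) * t ^ ℓ.toNat)
  / ∑ ℓ ∈ Finset.range j, t ^ ℓ

open Finset

theorem Int.sum_Icc_add_natCast_eq_sum_range {M : Type*} [AddCommMonoid M] (f : ℤ → M)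
    (a : ℤ) (k : ℕ) :
    ∑ ℓ ∈ Icc a (a + k), f ℓ = ∑ m ∈ Finset.range (k + 1), f (a + m) := by
  have hIcc : Icc a (a + k)
      = (Finset.range (k + 1)).map (Nat.castEmbedding.trans (addLeftEmbedding a)) := by
    ext x
    simp only [mem_Icc, mem_map, Finset.mem_range, Function.Embedding.trans_apply,
      Nat.castEmbedding_apply, addLeftEmbedding_apply]
    constructor
    · intro hx
      exact ⟨(x - a).toNat, by omega, by omega⟩
    · rintro ⟨m, hm, rfl⟩
      omega
  rw [hIcc, sum_map]
  rfl

theorem sum_shifted_mul_pow_le_sum_succ_mul_pow (n k : ℕ) {t : ℝ} (ht : 0 ≤ t) :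
    ((n : ℝ) + k + 2) * ∑ m ∈ range (k + 1), (m : ℝ) * t ^ (n + m)
      ≤ ((k : ℝ) + 1) * ∑ ℓ ∈ range (n + k + 1), ((ℓ : ℝ) + 1) * t ^ ℓ := by
  have htail : ∑ m ∈ range (k + 1), ((n + m : ℕ) + 1 : ℝ) * t ^ (n + m)
      ≤ ∑ ℓ ∈ range (n + k + 1), ((ℓ : ℝ) + 1) * t ^ ℓ := by
    rw [show n + k + 1 = n + (k + 1) by ring, sum_range_add _ n (k + 1)]
    exact le_add_of_nonneg_left (sum_nonneg fun ℓ _ => by positivity)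
  refine le_trans ?_ (mul_le_mul_of_nonneg_left htail (by positivity))
  rw [mul_sum, mul_sum]
  refine sum_le_sum fun m hm => ?_
  have hmk : (m : ℝ) ≤ k := by exact_mod_cast Nat.lt_succ_iff.mp (mem_range.mp hm)
  have hcoeff : ((n : ℝ) + k + 2) * m ≤ ((k : ℝ) + 1) * ((n + m : ℕ) + 1) := by
    push_cast
    nlinarith
  calc ((n : ℝ) + k + 2) * (m * t ^ (n + m))
      = (((n : ℝ) + k + 2) * m) * t ^ (n + m) := by ring
    _ ≤ (((k : ℝ) + 1) * ((n + m : ℕ) + 1)) * t ^ (n + m) :=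
        mul_le_mul_of_nonneg_right hcoeff (by positivity)
    _ = ((k : ℝ) + 1) * (((n + m : ℕ) + 1 : ℝ) * t ^ (n + m)) := by ring

theorem sum_Icc_birth_index_eq_sum_range (n k : ℕ) (t : ℝ) :
    ∑ ℓ ∈ Icc (((n + k + 2 : ℕ) : ℤ) - k - 2) (((n + k + 2 : ℕ) : ℤ) - 2),
        ((ℓ : ℝ) - ((n + k + 2 : ℕ) : ℝ) + k + 2) * t ^ ℓ.toNat
      = ∑ m ∈ range (k + 1), (m : ℝ) * t ^ (n + m) := by
  have hIcc : Icc (((n + k + 2 : ℕ) : ℤ) - k - 2) (((n + k + 2 : ℕ) : ℤ) - 2)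
      = Icc (n : ℤ) (n + k) := by
    push_cast
    congr 1 <;> ring
  rw [hIcc, Int.sum_Icc_add_natCast_eq_sum_range]
  refine Finset.sum_congr rfl fun m _ => ?_
  rw [show ((n : ℤ) + m).toNat = n + m by omega]
  push_cast
  ring

theorem birth_rate_nonneg_general (j k : ℕ) (hk : k + 2 ≤ j) (t : ℝ) (ht : 0 ≤ t) :
    0 ≤ ((k : ℝ) + 1) * ∑ ℓ ∈ Finset.range (j - 1), ((ℓ : ℝ) + 1) * t ^ ℓ
        - (j : ℝ) * ∑ ℓ ∈ Finset.Icc ((j : ℤ) - k - 2) ((j : ℤ) - 2),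
            ((ℓ : ℝ) - (j : ℝ) + (k : ℝ) + 2) * t ^ ℓ.toNat ∧
    0 ≤ pj j k t := by
  obtain ⟨n, rfl⟩ : ∃ n, j = n + k + 2 := ⟨j - k - 2, by omega⟩
  unfold pj
  rw [sum_Icc_birth_index_eq_sum_range, show n + k + 2 - 1 = n + k + 1 by omega]
  refine (fun hnum => ⟨hnum, div_nonneg hnum (sum_nonneg fun ℓ _ => by positivity)⟩) ?_
  rw [sub_nonneg]
  push_cast
  exact sum_shifted_mul_pow_le_sum_succ_mul_pow n k ht

/-- The numerator of the birth rate `p_j(t,k)` is nonnegative for `0 ≤ k ≤ j-2` and `t ≥ 0`;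
consequently `p_j(t,k) ≥ 0`. -/
theorem birth_rate_nonneg (j k : ℕ) (hj : 1 ≤ j) (hk : k + 2 ≤ j) (t : ℝ) (ht : 0 ≤ t) :
    0 ≤ ((k : ℝ) + 1) * ∑ ℓ ∈ Finset.range (j - 1), ((ℓ : ℝ) + 1) * t ^ ℓ
        - (j : ℝ) * ∑ ℓ ∈ Finset.Icc ((j : ℤ) - k - 2) ((j : ℤ) - 2),
            ((ℓ : ℝ) - (j : ℝ) + (k : ℝ) + 2) * t ^ ℓ.toNat ∧
    0 ≤ pj j k t :=
  birth_rate_nonneg_general j k hk t ht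
end

section
/- For j ∈ ℕ, 0 ≤ k ≤ j-2, and t ≥ 0, the birth rates satisfy the identity p_j(t,k) − t·p_j(t,k+1) = (∑_{ℓ=0}^{j-1}(k−ℓ+1)t^ℓ) / (∑_{ℓ=0}^{j-1} t^ℓ). -/
open Finset

theorem sum_Icc_sub_left_mul_eq_sum_range {R : Type*} [CommRing R] (b : ℤ) (m : ℕ) (g : ℤ → R) :
    ∑ ℓ ∈ Icc b (b + m), ((ℓ : R) - b) * g ℓ = ∑ i ∈ range m, ((i : R) + 1) * g (b + 1 + i) := by
  induction m with
  | zero => simp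
  | succ m ih =>
    rw [Nat.cast_succ, ← add_assoc, ← insert_Icc_right_eq_Icc_add_one (by omega),
      sum_insert (by simp), ih, sum_range_succ, add_right_comm b]
    push_cast
    ring

theorem pj_tail_sum_eq {j k : ℕ} (hk : k + 1 ≤ j) (t : ℝ) :
    ∑ ℓ ∈ Icc ((j : ℤ) - k - 2) ((j : ℤ) - 2), ((ℓ : ℝ) - j + k + 2) * t ^ ℓ.toNat =
      ∑ i ∈ range k, ((i : ℝ) + 1) * t ^ (j - k - 1 + i) := by
  have h := sum_Icc_sub_left_mul_eq_sum_range ((j : ℤ) - k - 2) k (fun ℓ => t ^ ℓ.toNat)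
  rw [show (j : ℤ) - k - 2 + k = j - 2 by ring] at h
  convert h using 2 with ℓ _ i _
  · push_cast; ring
  · congr 2
    omega

theorem sum_range_sub_mul_sum_range_succ (t : ℝ) (n k : ℕ) :
    ∑ i ∈ range k, ((i : ℝ) + 1) * t ^ (n + 1 + i)
      - t * ∑ i ∈ range (k + 1), ((i : ℝ) + 1) * t ^ (n + i) = -((k + 1) * t ^ (n + k + 1)) := by
  rw [sum_range_succ, mul_add, mul_sum, ← sub_sub, ← sum_sub_distrib]
  have hzero : ∀ i ∈ range k,
      ((i : ℝ) + 1) * t ^ (n + 1 + i) - t * (((i : ℝ) + 1) * t ^ (n + i)) = 0 := by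
    intro i _
    ring
  rw [sum_eq_zero hzero]
  ring

theorem sum_range_affine_mul_pow (t c : ℝ) (n : ℕ) :
    ∑ ℓ ∈ range (n + 1), (c - ℓ + 1) * t ^ ℓ =
      (c + 1) * ∑ ℓ ∈ range n, ((ℓ : ℝ) + 1) * t ^ ℓ
        - (c + 2) * t * ∑ ℓ ∈ range n, ((ℓ : ℝ) + 1) * t ^ ℓ + (n + 1) * (c + 1) * t ^ n := by
  induction n with
  | zero => simp
  | succ n ih =>
    rw [sum_range_succ, ih, sum_range_succ]
    push_cast
    ring

theorem birth_rate_difference_identity_general (j k : ℕ) (hk : k + 2 ≤ j) (t : ℝ) :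
    pj j k t - t * pj j (k + 1) t =
      (∑ ℓ ∈ Finset.range j, ((k : ℝ) - (ℓ : ℝ) + 1) * t ^ ℓ) /
        ∑ ℓ ∈ Finset.range j, t ^ ℓ := by
  obtain ⟨n, rfl⟩ : ∃ n, j = n + k + 2 := ⟨j - (k + 2), by omega⟩
  unfold pj
  rw [pj_tail_sum_eq (by omega), pj_tail_sum_eq (by omega), ← mul_div_assoc, div_sub_div_same]
  congr 1
  have htel := sum_range_sub_mul_sum_range_succ t n k
  have hsum := sum_range_affine_mul_pow t k (n + k + 1)
  simp only [show n + k + 2 - k - 1 = n + 1 by omega, show n + k + 2 - (k + 1) - 1 = n by omega,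
    show n + k + 2 - 1 = n + k + 1 by omega, show n + k + 1 + 1 = n + k + 2 by omega] at htel hsum ⊢
  push_cast at htel hsum ⊢
  linear_combination (-((n : ℝ) + k + 2)) * htel - hsum

/-- `p_j(t,k) − t·p_j(t,k+1) = (∑_{ℓ=0}^{j-1}(k−ℓ+1)t^ℓ) / (∑_{ℓ=0}^{j-1} t^ℓ)`. -/
theorem birth_rate_difference_identity (j k : ℕ) (hk : k + 2 ≤ j) (t : ℝ) (ht : 0 ≤ t) :
    pj j k t - t * pj j (k + 1) t =
      (∑ ℓ ∈ Finset.range j, ((k : ℝ) - (ℓ : ℝ) + 1) * t ^ ℓ) /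
        ∑ ℓ ∈ Finset.range j, t ^ ℓ :=
  birth_rate_difference_identity_general j k hk t
end

section
/- Fix j ∈ ℕ and 0 ≤ k ≤ j-2, and let f(t) = t^{k+1}/∑_{ℓ=0}^{j-1} t^ℓ. Then f satisfies the ODE f'(t) = −p_j(t,k+1)·f(t) + p_j(t,k)·t^k/∑_{ℓ=0}^{j-1} t^ℓ for all t > 0. -/
open Finset

/-- `B_κ`, indexed downwards from the top exponent `n = j - 2`. The paper's summand `i = κ` has
coefficient zero and is left out: for `κ = n + 1` its exponent `n - κ` would be a truncated `-1`. -/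
noncomputable def topWeightedPowSum (n κ : ℕ) (t : ℝ) : ℝ :=
  ∑ i ∈ range κ, ((κ : ℝ) - i) * t ^ (n - i)

lemma sum_Icc_eq_topWeightedPowSum {j κ : ℕ} (h : κ + 1 ≤ j) (t : ℝ) :
    ∑ ℓ ∈ Icc ((j : ℤ) - κ - 2) ((j : ℤ) - 2), ((ℓ : ℝ) - j + κ + 2) * t ^ ℓ.toNat
      = topWeightedPowSum (j - 2) κ t := by
  have hreindex : ∑ ℓ ∈ Icc ((j : ℤ) - κ - 2) ((j : ℤ) - 2), ((ℓ : ℝ) - j + κ + 2) * t ^ ℓ.toNat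
      = ∑ i ∈ range (κ + 1), ((κ : ℝ) - i) * t ^ (j - 2 - i) := by
    refine sum_nbij' (fun ℓ => ((j : ℤ) - 2 - ℓ).toNat) (fun i => (j : ℤ) - 2 - i)
      ?_ ?_ ?_ ?_ ?_ <;> intro a ha <;> simp only [mem_Icc, mem_range] at ha ⊢
    any_goals omega
    have hcast : ((((j : ℤ) - 2 - a).toNat : ℕ) : ℝ) = (j : ℝ) - 2 - a := by
      exact_mod_cast Int.toNat_of_nonneg (by omega : 0 ≤ (j : ℤ) - 2 - a)
    rw [hcast, show j - 2 - ((j : ℤ) - 2 - a).toNat = a.toNat by omega]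
    ring
  rw [hreindex, sum_range_succ, topWeightedPowSum]
  simp

lemma pj_eq_topWeightedPowSum {j κ : ℕ} (h : κ + 1 ≤ j) (t : ℝ) :
    pj j κ t = (((κ : ℝ) + 1) * ∑ ℓ ∈ range (j - 1), ((ℓ : ℝ) + 1) * t ^ ℓ
      - j * topWeightedPowSum (j - 2) κ t) / ∑ ℓ ∈ range j, t ^ ℓ := by
  rw [pj, sum_Icc_eq_topWeightedPowSum h]

lemma mul_topWeightedPowSum_succ {n κ : ℕ} (h : κ ≤ n) (t : ℝ) :
    t * topWeightedPowSum n (κ + 1) t = (κ + 1) * t ^ (n + 1) + topWeightedPowSum n κ t := by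
  rw [topWeightedPowSum, topWeightedPowSum, mul_sum, sum_range_succ']
  have hshift : ∀ i ∈ range κ, t * (((κ + 1 : ℕ) : ℝ) - (i + 1 : ℕ)) * t ^ (n - (i + 1))
      = ((κ : ℝ) - i) * t ^ (n - i) := by
    intro i hi
    rw [show n - i = n - (i + 1) + 1 by simp only [mem_range] at hi; omega, pow_succ]
    push_cast
    ring
  simp only [← mul_assoc, sum_congr rfl hshift, Nat.sub_zero]
  push_cast
  ring

lemma hasDerivAt_geom_sum (n : ℕ) (t : ℝ) :
    HasDerivAt (fun s : ℝ => ∑ ℓ ∈ range (n + 1), s ^ ℓ)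
      (∑ ℓ ∈ range n, ((ℓ : ℝ) + 1) * t ^ ℓ) t := by
  refine (HasDerivAt.fun_sum fun ℓ (_ : ℓ ∈ range (n + 1)) => hasDerivAt_pow ℓ t).congr_deriv ?_
  rw [sum_range_succ']
  simp

lemma one_sub_mul_sum_range_succ_mul_pow (n : ℕ) (t : ℝ) :
    (1 - t) * ∑ ℓ ∈ range n, ((ℓ : ℝ) + 1) * t ^ ℓ
      = ∑ ℓ ∈ range (n + 1), t ^ ℓ - (n + 1) * t ^ n := by
  induction n with
  | zero => simp
  | succ n ih =>
    rw [sum_range_succ, sum_range_succ (fun ℓ => t ^ ℓ)]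
    push_cast
    linear_combination ih

/-- The target function `f(t) = t^{k+1}/∑_{ℓ<j} t^ℓ` satisfies the forward ODE
`f'(t) = −p_j(t,k+1) f(t) + p_j(t,k) t^k/∑_{ℓ<j} t^ℓ`. -/
theorem target_function_satisfies_ode (j k : ℕ) (hk : k + 2 ≤ j) (t : ℝ) (ht : 0 < t) :
    HasDerivAt (fun s : ℝ => s ^ (k + 1) / ∑ ℓ ∈ Finset.range j, s ^ ℓ)
      (-pj j (k + 1) t * (t ^ (k + 1) / ∑ ℓ ∈ Finset.range j, t ^ ℓ)
        + pj j k t * t ^ k / ∑ ℓ ∈ Finset.range j, t ^ ℓ) t := by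
  obtain ⟨n, rfl⟩ : ∃ n, j = n + 2 := ⟨j - 2, by omega⟩
  have hS : 0 < ∑ ℓ ∈ range (n + 2), t ^ ℓ :=
    sum_pos (fun ℓ _ => pow_pos ht ℓ) nonempty_range_add_one
  refine ((hasDerivAt_pow (k + 1) t).fun_div (hasDerivAt_geom_sum (n + 1) t) hS.ne').congr_deriv ?_
  rw [pj_eq_topWeightedPowSum (by omega), pj_eq_topWeightedPowSum (by omega)]
  simp only [Nat.add_sub_cancel]
  have hgeom := one_sub_mul_sum_range_succ_mul_pow (n + 1) t
  have hshift := mul_topWeightedPowSum_succ (by omega : k ≤ n) t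
  field_simp
  push_cast at hgeom ⊢
  linear_combination (-((n : ℝ) + 2) * t ^ k) * hshift - ((k : ℝ) + 1) * t ^ k * hgeom
end

section
/- Fix j ∈ ℕ and u ∈ (0,1). The function t ↦ log(1 − u(1 − t^j)) / log t, defined for t ∈ (0,∞) \ {1}, is increasing on (0,1) and on (1,∞), and extends continuously to t = 1 with value depending continuously on the data; in particular, for any 0 < s < t with s,t ≠ 1, one has log(1−u(1−s^j))/log s ≤ log(1−u(1−t^j))/log t. -/
/-!
With `t = exp x` the quotient becomes `h x / x` for `h x = log (1 - u + u * exp (j * x))`,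
the slope of the secant of `h` through `0` and `x`. Since `h` is convex (its derivative
`u j e^{jx} / (1 - u + u e^{jx})` is increasing), this slope increases with `x` across the
whole of `ℝ \ {0}`, and it tends to `h' 0 = j u` as `x → 0`.
-/

open Filter Real Set Topology

lemma convexOn_log_add_mul_exp {a b : ℝ} (ha : 0 < a) (hb : 0 ≤ b) :
    ConvexOn ℝ univ fun x => log (a + b * exp x) := by
  have hpos : ∀ x, 0 < a + b * exp x := fun x => by positivity
  have hderiv : ∀ x, HasDerivAt (fun x => log (a + b * exp x))
      (b * exp x / (a + b * exp x)) x :=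
    fun x => (((hasDerivAt_exp x).const_mul b).const_add a).log (hpos x).ne'
  refine Monotone.convexOn_univ_of_deriv (fun x => (hderiv x).differentiableAt) fun x y hxy => ?_
  rw [(hderiv x).deriv, (hderiv y).deriv, div_le_div_iff₀ (hpos x) (hpos y)]
  nlinarith [mul_le_mul_of_nonneg_left (exp_le_exp.2 hxy) (mul_nonneg ha.le hb)]

lemma convexOn_log_add_mul_exp_mul {a b : ℝ} (ha : 0 < a) (hb : 0 ≤ b) (c : ℝ) :
    ConvexOn ℝ univ fun x => log (a + b * exp (c * x)) :=
  (convexOn_log_add_mul_exp ha hb).comp_linearMap (LinearMap.mul ℝ ℝ c)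

lemma ConvexOn.comp_log_div_log_le {h : ℝ → ℝ} (hh : ConvexOn ℝ univ h) (h0 : h 0 = 0)
    {s t : ℝ} (hs : 0 < s) (hst : s ≤ t) (hs1 : s ≠ 1) (ht1 : t ≠ 1) :
    h (log s) / log s ≤ h (log t) / log t := by
  simpa [h0] using hh.secant_mono (mem_univ 0) (mem_univ (log s)) (mem_univ (log t))
    (log_ne_zero_of_pos_of_ne_one hs hs1)
    (log_ne_zero_of_pos_of_ne_one (hs.trans_le hst) ht1) (log_le_log hs hst)

lemma tendsto_comp_log_div_log_of_hasDerivAt {h : ℝ → ℝ} {h' : ℝ} (hh : HasDerivAt h h' 0)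
    (h0 : h 0 = 0) : Tendsto (fun t => h (log t) / log t) (𝓝[≠] 1) (𝓝 h') := by
  have hlog : Tendsto log (𝓝[≠] 1) (𝓝[≠] 0) := by
    simpa using (hasDerivAt_log one_ne_zero).tendsto_nhdsNE (by norm_num)
  refine ((hasDerivAt_iff_tendsto_slope.mp hh).comp hlog).congr fun t => ?_
  simp [slope_def_field, h0]

theorem uniform_quantile_monotone_general (j : ℕ) (u : ℝ) (hu : u ∈ Set.Ioo (0 : ℝ) 1) :
    (MonotoneOn (fun t : ℝ => Real.log (1 - u * (1 - t ^ j)) / Real.log t)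
        (Set.Ioo (0 : ℝ) 1)) ∧
    (MonotoneOn (fun t : ℝ => Real.log (1 - u * (1 - t ^ j)) / Real.log t)
        (Set.Ioi (1 : ℝ))) ∧
    (Tendsto (fun t : ℝ => Real.log (1 - u * (1 - t ^ j)) / Real.log t)
        (nhdsWithin 1 {(1 : ℝ)}ᶜ) (nhds ((j : ℝ) * u))) ∧
    ∀ s t : ℝ, 0 < s → s < t → s ≠ 1 → t ≠ 1 →
      Real.log (1 - u * (1 - s ^ j)) / Real.log s ≤
        Real.log (1 - u * (1 - t ^ j)) / Real.log t := by
  set h : ℝ → ℝ := fun x => log ((1 - u) + u * exp (j * x)) with h_def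
  have h0 : h 0 = 0 := by simp [h_def]
  have h_log : ∀ t, 0 < t → log (1 - u * (1 - t ^ j)) = h (log t) := fun t ht => by
    simp only [h_def, exp_nat_mul, exp_log ht]; ring_nf
  have h_deriv : HasDerivAt h (j * u) 0 := by
    have := ((((hasDerivAt_id (0 : ℝ)).const_mul (j : ℝ)).exp.const_mul u).const_add
      (1 - u)).log (by simp)
    convert this using 1 <;> simp [h_def]; ring
  have key : ∀ s t, 0 < s → s ≤ t → s ≠ 1 → t ≠ 1 →
      log (1 - u * (1 - s ^ j)) / log s ≤ log (1 - u * (1 - t ^ j)) / log t :=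
    fun s t hs hst hs1 ht1 => by
      rw [h_log s hs, h_log t (hs.trans_le hst)]
      exact (convexOn_log_add_mul_exp_mul (sub_pos.2 hu.2) hu.1.le j).comp_log_div_log_le h0
        hs hst hs1 ht1
  refine ⟨fun s hs t ht hst => key s t hs.1 hst hs.2.ne ht.2.ne,
    fun s hs t ht hst => key s t (one_pos.trans hs) hst hs.ne' ht.ne', ?_,
    fun s t hs hst => key s t hs hst.le⟩
  refine (tendsto_comp_log_div_log_of_hasDerivAt h_deriv h0).congr' ?_
  filter_upwards [eventually_nhdsWithin_of_eventually_nhds (Ioi_mem_nhds one_pos)] with t ht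
  rw [h_log t ht]

/-- For fixed `j ≥ 1` and `u ∈ (0,1)`, the function
`t ↦ log(1 − u(1 − t^j)) / log t` is monotone: it is increasing on `(0,1)` and on
`(1,∞)`, it extends continuously at `t = 1` (with value `j·u`), and for any
`0 < s < t` with `s, t ≠ 1` one has the inequality between the two values. -/
theorem uniform_quantile_monotone (j : ℕ) (hj : 1 ≤ j) (u : ℝ) (hu : u ∈ Set.Ioo (0 : ℝ) 1) :
    (MonotoneOn (fun t : ℝ => Real.log (1 - u * (1 - t ^ j)) / Real.log t)
        (Set.Ioo (0 : ℝ) 1)) ∧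
    (MonotoneOn (fun t : ℝ => Real.log (1 - u * (1 - t ^ j)) / Real.log t)
        (Set.Ioi (1 : ℝ))) ∧
    (Tendsto (fun t : ℝ => Real.log (1 - u * (1 - t ^ j)) / Real.log t)
        (nhdsWithin 1 {(1 : ℝ)}ᶜ) (nhds ((j : ℝ) * u))) ∧
    ∀ s t : ℝ, 0 < s → s < t → s ≠ 1 → t ≠ 1 →
      Real.log (1 - u * (1 - s ^ j)) / Real.log s ≤
        Real.log (1 - u * (1 - t ^ j)) / Real.log t :=
  uniform_quantile_monotone_general j u hu
end

section
/- Let S_n^ℓ denote the number of permutations of [n] with exactly ℓ inversions. Then binom(n−1, ℓ) ≤ S_n^ℓ ≤ binom(n+ℓ, ℓ), and consequently for each fixed ℓ, S_n^ℓ / n^ℓ → 1/ℓ! as n → ∞. -/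
open Filter

/-- The number of permutations of `[n]` with exactly `ℓ` inversions. -/
def numPermsWithInv (n ℓ : ℕ) : ℕ :=
  (Finset.univ.filter (fun σ : Equiv.Perm (Fin n) => InvCount n σ = ℓ)).card

/-!
Writing a permutation of `Fin (n + 1)` as its first value `p` followed by a permutation `τ` of
`Fin n` (the relative order of the remaining values) is a bijection under which the inversion
count becomes `p + inv τ`, since exactly `p` later values lie below `p`. Hence
`S_{n+1}^ℓ = ∑_{k ≤ min n ℓ} S_n^{ℓ-k}`. The terms `k = 0, 1` give Pascal's rule as a lower
recursion, so `C(n, ℓ) ≤ S_{n+1}^ℓ`; dropping the constraint `k ≤ n` gives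
`S_{n+1}^ℓ ≤ ∑_{j ≤ ℓ} S_n^j`, and the hockey-stick identity yields `S_n^ℓ ≤ C(n + ℓ, ℓ)`.
Since `(n - ℓ)^ℓ / ℓ! ≤ C(n - 1, ℓ)` and `C(n + ℓ, ℓ) ≤ (n + ℓ)^ℓ / ℓ!`, these bounds squeeze
`S_n^ℓ / n^ℓ` to `1 / ℓ!`.
-/

open Finset Equiv

def succAbovePerm {n : ℕ} (p : Fin (n + 1)) (τ : Perm (Fin n)) : Perm (Fin (n + 1)) :=
  (finSuccEquiv' 0).trans (τ.optionCongr.trans (finSuccEquiv' p).symm)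

@[simp] lemma succAbovePerm_zero {n : ℕ} (p : Fin (n + 1)) (τ : Perm (Fin n)) :
    succAbovePerm p τ 0 = p := by
  simp [succAbovePerm, finSuccEquiv'_at]

@[simp] lemma succAbovePerm_succ {n : ℕ} (p : Fin (n + 1)) (τ : Perm (Fin n)) (j : Fin n) :
    succAbovePerm p τ j.succ = p.succAbove (τ j) := by
  rw [← Fin.zero_succAbove j]
  simp only [succAbovePerm, Equiv.trans_apply, finSuccEquiv'_succAbove, Equiv.optionCongr_apply,
    Option.map_some, finSuccEquiv'_symm_some]

lemma invCount_eq_sum_card {n : ℕ} (σ : Perm (Fin n)) :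
    InvCount n σ = ∑ i, #{j | i < j ∧ σ j < σ i} := by
  simp only [InvCount, card_filter, Fintype.sum_prod_type]

lemma card_filter_succAbove_lt_self {n : ℕ} (p : Fin (n + 1)) :
    #{v : Fin n | p.succAbove v < p} = p := by
  simp only [Fin.succAbove_lt_iff_castSucc_lt]
  simp only [Fin.lt_def, Fin.val_castSucc, Fin.card_filter_val_lt]
  exact min_eq_right (Nat.lt_succ_iff.mp p.isLt)

lemma invCount_succAbovePerm {n : ℕ} (p : Fin (n + 1)) (τ : Perm (Fin n)) :
    InvCount (n + 1) (succAbovePerm p τ) = p + InvCount n τ := by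
  have hfirst : #{j | p.succAbove (τ j) < p} = (p : ℕ) := by
    rw [← card_filter_succAbove_lt_self p]
    exact card_equiv τ (by simp)
  simp [invCount_eq_sum_card, Fin.sum_univ_succ, Fin.card_filter_univ_succ', hfirst,
    Fin.succAbove_lt_succAbove_iff]

lemma succAbovePerm_injective (n : ℕ) :
    Function.Injective (fun x : Fin (n + 1) × Perm (Fin n) => succAbovePerm x.1 x.2) := by
  rintro ⟨p, τ⟩ ⟨p', τ'⟩ h
  have hp : p = p' := by simpa using congrArg (· 0) h
  subst hp
  refine Prod.ext rfl (Equiv.ext fun j => Fin.succAbove_right_injective (p := p) ?_)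
  simpa using congrArg (· j.succ) h

noncomputable def succAbovePermEquiv (n : ℕ) : Fin (n + 1) × Perm (Fin n) ≃ Perm (Fin (n + 1)) :=
  Equiv.ofBijective _ <| (Fintype.bijective_iff_injective_and_card _).mpr
    ⟨succAbovePerm_injective n, by simp [Fintype.card_perm, Nat.factorial_succ]⟩

lemma numPermsWithInv_succ (n ℓ : ℕ) :
    numPermsWithInv (n + 1) ℓ =
      ∑ k ∈ range (n + 1), if k ≤ ℓ then numPermsWithInv n (ℓ - k) else 0 := by
  have hfiber (p : Fin (n + 1)) : #{τ : Perm (Fin n) | (p : ℕ) + InvCount n τ = ℓ} =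
      if (p : ℕ) ≤ ℓ then numPermsWithInv n (ℓ - p) else 0 := by
    split_ifs with hp
    · exact congrArg card (filter_congr fun τ _ => by omega)
    · exact card_eq_zero.mpr (filter_false_of_mem fun τ _ => by omega)
  rw [← Fin.sum_univ_eq_sum_range (fun k => if k ≤ ℓ then numPermsWithInv n (ℓ - k) else 0),
    numPermsWithInv, card_filter, ← (succAbovePermEquiv n).sum_comp, Fintype.sum_prod_type]
  refine sum_congr rfl fun p _ => ?_
  rw [← hfiber, card_filter]
  simp [succAbovePermEquiv, invCount_succAbovePerm]

lemma one_le_numPermsWithInv_zero (n : ℕ) : 1 ≤ numPermsWithInv n 0 :=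
  card_pos.mpr ⟨1, by simpa [InvCount] using fun _ _ => le_of_lt⟩

lemma numPermsWithInv_add_le (n ℓ : ℕ) :
    numPermsWithInv (n + 1) ℓ + numPermsWithInv (n + 1) (ℓ + 1) ≤
      numPermsWithInv (n + 2) (ℓ + 1) := by
  rw [numPermsWithInv_succ (n + 1), sum_range_succ', sum_range_succ']
  simp

lemma choose_le_numPermsWithInv (n ℓ : ℕ) : n.choose ℓ ≤ numPermsWithInv (n + 1) ℓ := by
  induction n generalizing ℓ with
  | zero => cases ℓ <;> simp [one_le_numPermsWithInv_zero]
  | succ n ih =>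
    cases ℓ with
    | zero => simpa using one_le_numPermsWithInv_zero (n + 2)
    | succ ℓ =>
      rw [Nat.choose_succ_succ]
      exact (add_le_add (ih ℓ) (ih (ℓ + 1))).trans (numPermsWithInv_add_le n ℓ)

lemma numPermsWithInv_le_factorial (n ℓ : ℕ) : numPermsWithInv n ℓ ≤ n.factorial := by
  rw [numPermsWithInv]
  simpa [Fintype.card_perm] using card_filter_le (univ : Finset (Perm (Fin n))) _

lemma numPermsWithInv_succ_le_sum (n ℓ : ℕ) :
    numPermsWithInv (n + 1) ℓ ≤ ∑ j ∈ range (ℓ + 1), numPermsWithInv n j := by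
  rw [numPermsWithInv_succ, ← sum_filter, ← sum_range_reflect]
  refine sum_le_sum_of_subset_of_nonneg ?_ fun _ _ _ => Nat.zero_le _
  intro k
  simp only [mem_filter, mem_range]
  omega

lemma numPermsWithInv_le_choose (n ℓ : ℕ) : numPermsWithInv n ℓ ≤ (n + ℓ).choose ℓ := by
  induction n generalizing ℓ with
  | zero => simpa using numPermsWithInv_le_factorial 0 ℓ
  | succ n ih =>
    calc numPermsWithInv (n + 1) ℓ ≤ ∑ j ∈ range (ℓ + 1), numPermsWithInv n j :=
          numPermsWithInv_succ_le_sum n ℓ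
      _ ≤ ∑ j ∈ range (ℓ + 1), (j + n).choose n := by
          gcongr with j
          rw [add_comm, Nat.choose_symm_add]
          exact ih j
      _ = (n + 1 + ℓ).choose ℓ := by
          rw [Nat.sum_range_add_choose, Nat.choose_symm_of_eq_add (by ring)]
          congr 1
          ring

lemma tendsto_add_const_pow_div_pow (c : ℝ) (ℓ : ℕ) :
    Tendsto (fun n : ℕ => (n + c) ^ ℓ / n ^ ℓ) atTop (nhds 1) := by
  have h : Tendsto (fun n : ℕ => 1 + c / n) atTop (nhds 1) := by
    simpa using tendsto_const_nhds.add (tendsto_const_div_atTop_nhds_zero_nat c)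
  have hpow : Tendsto (fun n : ℕ => (1 + c / n) ^ ℓ) atTop (nhds 1) := by
    simpa using h.pow ℓ
  refine hpow.congr' ?_
  filter_upwards [eventually_ne_atTop 0] with n hn
  rw [← div_pow, add_div, div_self (Nat.cast_ne_zero.mpr hn)]

lemma sub_pow_div_factorial_le_choose_pred {n ℓ : ℕ} (hℓn : ℓ ≤ n) (hn : 0 < n) :
    ((n : ℝ) - ℓ) ^ ℓ / ℓ.factorial ≤ (n - 1).choose ℓ := by
  simpa [Nat.sub_add_cancel hn, Nat.cast_sub hℓn] using Nat.pow_le_choose (α := ℝ) ℓ (n - 1)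

/-- `binom(n−1,ℓ) ≤ S_n^ℓ ≤ binom(n+ℓ,ℓ)`, and hence `S_n^ℓ/n^ℓ → 1/ℓ!` as `n → ∞`. -/
theorem numPermsWithInv_bounds_and_limit (ℓ : ℕ) :
    (∀ n : ℕ, 1 ≤ n →
      Nat.choose (n - 1) ℓ ≤ numPermsWithInv n ℓ ∧
      numPermsWithInv n ℓ ≤ Nat.choose (n + ℓ) ℓ) ∧
    Tendsto (fun n : ℕ => (numPermsWithInv n ℓ : ℝ) / (n : ℝ) ^ ℓ) atTop
      (nhds (1 / (Nat.factorial ℓ : ℝ))) := by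
  have hbounds (n : ℕ) (hn : 1 ≤ n) :
      Nat.choose (n - 1) ℓ ≤ numPermsWithInv n ℓ ∧
      numPermsWithInv n ℓ ≤ Nat.choose (n + ℓ) ℓ := by
    obtain ⟨m, rfl⟩ := Nat.exists_eq_add_of_le' hn
    exact ⟨choose_le_numPermsWithInv m ℓ, numPermsWithInv_le_choose _ ℓ⟩
  refine ⟨hbounds, ?_⟩
  have hlim (c : ℝ) : Tendsto (fun n : ℕ => (n + c) ^ ℓ / n ^ ℓ / ℓ.factorial) atTop
      (nhds (1 / ℓ.factorial)) := (tendsto_add_const_pow_div_pow c ℓ).div_const _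
  refine tendsto_of_tendsto_of_tendsto_of_le_of_le' (hlim (-ℓ)) (hlim ℓ) ?_ ?_
  · filter_upwards [eventually_ge_atTop ℓ, eventually_gt_atTop 0] with n hℓn hn
    rw [← sub_eq_add_neg, div_right_comm]
    gcongr
    exact (sub_pow_div_factorial_le_choose_pred hℓn hn).trans (mod_cast (hbounds n hn).1)
  · filter_upwards [eventually_gt_atTop 0] with n hn
    rw [div_right_comm]
    gcongr
    exact (Nat.cast_le.mpr (hbounds n hn).2).trans (by simpa using Nat.choose_le_pow_div ℓ (n + ℓ))
end

section
/- For every pair of tuples I, I' ∈ E_n differing only in coordinate ℓ with I'_ℓ = I_ℓ + 1, the permutations σ = Φ(I) and σ' = Φ(I') satisfy σ' = σ ∘ τ for some transposition τ; i.e., the generator of the expanded hypercube graph H_n is contained in the set of transpositions. -/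
open Finset Equiv

theorem strictAntiOn_card_filter_lt {α : Type*} [LinearOrder α] (U : Finset α) :
    StrictAntiOn (fun x => #{u ∈ U | x < u}) U := by
  intro x _ y hy hxy
  refine card_lt_card ⟨fun u hu => ?_, fun h => ?_⟩
  · simp only [mem_filter] at hu ⊢
    exact ⟨hu.1, hxy.trans hu.2⟩
  · exact lt_irrefl y (mem_filter.1 (h (mem_filter.2 ⟨hy, hxy⟩))).2

theorem swap_lt_swap_iff_of_notMem_Ioc {α : Type*} [LinearOrder α] {a b x y : α} (hab : a < b)
    (hx : x ∉ Set.Ioc a b) (hy : y ∉ Set.Ioc a b) : swap a b x < swap a b y ↔ x < y := by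
  simp only [Set.mem_Ioc, not_and, not_le] at hx hy
  simp only [swap_apply_def]
  split_ifs <;> grind

section

variable {n : ℕ}

theorem invj_le (j : Fin n) (σ : Perm (Fin n)) : Invj n j σ ≤ j := by
  calc Invj n j σ ≤ #(Iio j) := card_le_card fun i hi => by simp_all
    _ = j := Fin.card_Iio j

theorem exists_lt_of_invj_lt {j : Fin n} {σ : Perm (Fin n)} (h : Invj n j σ < j) :
    ∃ i < j, σ i < σ j := by
  by_contra! hall
  have : ({i | i < j ∧ σ j < σ i} : Finset (Fin n)) = Iio j := by
    ext i
    simp only [mem_filter, mem_univ, true_and, mem_Iio, and_iff_left_iff_imp]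
    exact fun hi => (hall i hi).lt_of_ne (σ.injective.ne hi.ne')
  rw [Invj, this, Fin.card_Iio] at h
  exact lt_irrefl _ h

theorem invj_eq_card_filter_compl_image (j : Fin n) (σ : Perm (Fin n)) :
    Invj n j σ = #{v ∈ ((Ioi j).image σ)ᶜ | σ j < v} := by
  refine card_equiv σ fun i => ?_
  simp only [mem_filter, mem_univ, true_and, mem_compl, mem_image, mem_Ioi,
    EmbeddingLike.apply_eq_iff_eq, exists_eq_right, not_lt]
  exact ⟨fun h => ⟨h.1.le, h.2⟩, fun h => ⟨h.1.lt_of_ne (by rintro rfl; exact lt_irrefl _ h.2), h.2⟩⟩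

theorem invj_injective {σ τ : Perm (Fin n)} (h : ∀ j, Invj n j σ = Invj n j τ) : σ = τ := by
  ext1 j
  induction j using WellFoundedGT.induction with
  | _ j ih =>
  have himg : (Ioi j).image σ = (Ioi j).image τ := image_congr fun i hi => ih i (mem_Ioi.1 hi)
  have hσ : σ j ∈ ((Ioi j).image σ)ᶜ := by simp
  have hτ : τ j ∈ ((Ioi j).image σ)ᶜ := by rw [himg]; simp
  refine (strictAntiOn_card_filter_lt _).injOn hσ hτ ?_
  simpa only [invj_eq_card_filter_compl_image, himg] using h j

theorem invj_mul_left {j : Fin n} {σ : Perm (Fin n)} (f : Perm (Fin n))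
    (hf : ∀ i < j, f (σ j) < f (σ i) ↔ σ j < σ i) : Invj n j (f * σ) = Invj n j σ := by
  unfold Invj
  congr 1
  exact filter_congr fun i _ => and_congr_right (hf i)

theorem invj_mul_right {j : Fin n} (σ : Perm (Fin n)) {π : Perm (Fin n)} (hj : π j = j)
    (hπ : ∀ i, π i < j ↔ i < j) : Invj n j (σ * π) = Invj n j σ := by
  refine card_equiv π fun i => ?_
  simp [hj, hπ]

variable {σ : Perm (Fin n)} {p ℓ : Fin n}

theorem exists_gap_of_invj_lt (h : Invj n ℓ σ < ℓ) :
    ∃ p < ℓ, σ p < σ ℓ ∧ ∀ i < ℓ, σ i ∉ Set.Ioo (σ p) (σ ℓ) := by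
  obtain ⟨i, hi⟩ := exists_lt_of_invj_lt h
  obtain ⟨p, hp, hmax⟩ := exists_max_image {i | i < ℓ ∧ σ i < σ ℓ} σ ⟨i, by simpa using hi⟩
  simp only [mem_filter, mem_univ, true_and] at hp hmax
  exact ⟨p, hp.1, hp.2, fun i hi hσi => (hmax i ⟨hi, hσi.2⟩).not_gt hσi.1⟩

theorem invj_mul_swap_of_lt (hlt : σ p < σ ℓ) (hgap : ∀ i < ℓ, σ i ∉ Set.Ioo (σ p) (σ ℓ))
    {j : Fin n} (hj : j < ℓ) : Invj n j (σ * swap p ℓ) = Invj n j σ := by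
  have hnotMem : ∀ i ≤ j, σ i ∉ Set.Ioc (σ p) (σ ℓ) := fun i hi hmem =>
    hgap i (hi.trans_lt hj) ⟨hmem.1, hmem.2.lt_of_ne (σ.injective.ne (hi.trans_lt hj).ne)⟩
  rw [mul_swap_eq_swap_mul]
  exact invj_mul_left _ fun i hi =>
    swap_lt_swap_iff_of_notMem_Ioc hlt (hnotMem j le_rfl) (hnotMem i hi.le)

theorem invj_mul_swap_of_gt (hp : p < ℓ) {j : Fin n} (hj : ℓ < j) :
    Invj n j (σ * swap p ℓ) = Invj n j σ := by
  refine invj_mul_right σ (swap_apply_of_ne_of_ne (hp.trans hj).ne' hj.ne') fun i => ?_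
  rcases eq_or_ne i p with rfl | hip
  · simp [hj, hp.trans hj]
  rcases eq_or_ne i ℓ with rfl | hiℓ
  · simp [hj, hp.trans hj]
  rw [swap_apply_of_ne_of_ne hip hiℓ]

theorem invj_mul_swap_self (hp : p < ℓ) (hlt : σ p < σ ℓ)
    (hgap : ∀ i < ℓ, σ i ∉ Set.Ioo (σ p) (σ ℓ)) :
    Invj n ℓ (σ * swap p ℓ) = Invj n ℓ σ + 1 := by
  have hset : ({i | i < ℓ ∧ (σ * swap p ℓ) ℓ < (σ * swap p ℓ) i} : Finset (Fin n))
      = insert p ({i | i < ℓ ∧ σ ℓ < σ i} : Finset (Fin n)) := by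
    ext i
    simp only [mem_filter, mem_univ, true_and, mem_insert, Perm.mul_apply, swap_apply_right]
    rcases eq_or_ne i p with rfl | hip
    · simp [hp, hlt]
    rcases eq_or_ne i ℓ with rfl | hiℓ
    · simp [hip]
    rw [swap_apply_of_ne_of_ne hip hiℓ, or_iff_right hip]
    refine and_congr_right fun hi => ⟨fun hpi => ?_, hlt.trans⟩
    exact (not_lt.1 fun hiℓ' => hgap i hi ⟨hpi, hiℓ'⟩).lt_of_ne' (σ.injective.ne hiℓ)
  rw [Invj, Invj, hset, card_insert_of_notMem (by simp [hlt.le])]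

end

/-- If `σ'` and `σ` have inversion tables differing only in coordinate `ℓ`, where that of
`σ'` is one larger, then `σ' = σ ∘ τ` for some transposition `τ`: the generator of the
expanded hypercube `H_n` is contained in the set of transpositions. -/
theorem hypercube_generator_subset_transpositions (n : ℕ) (σ σ' : Equiv.Perm (Fin n))
    (ℓ : Fin n)
    (h1 : ∀ j : Fin n, j ≠ ℓ → Invj n j σ' = Invj n j σ)
    (h2 : Invj n ℓ σ' = Invj n ℓ σ + 1) :
    ∃ a b : Fin n, a ≠ b ∧ σ' = σ * Equiv.swap a b := by
  have hlt : Invj n ℓ σ < ℓ := by have := invj_le ℓ σ'; omega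
  obtain ⟨p, hpℓ, hp, hgap⟩ := exists_gap_of_invj_lt hlt
  refine ⟨p, ℓ, hpℓ.ne, invj_injective fun j => ?_⟩
  rcases lt_trichotomy j ℓ with hj | rfl | hj
  · rw [h1 j hj.ne, invj_mul_swap_of_lt hp hgap hj]
  · rw [h2, invj_mul_swap_self hpℓ hp hgap]
  · rw [h1 j hj.ne', invj_mul_swap_of_gt hpℓ hj]
end

section
/- Fix 1 ≤ i < j ≤ n. Let I ∈ E_n have I_j = j−i−1 and I_k = 0 for k ≠ j, and let I' have I'_j = j−i and I'_k = 0 for k ≠ j. Then Φ(I) is the permutation (1,...,i−1, i, i+2, ..., j, i+1, j+1, ..., n) (the value i+1 placed at position j, values i+2..j shifted left), Φ(I') is the same with values i and i+1 at positions i and j swapped, and Φ(I') = Φ(I) ∘ (i j). Consequently every transposition lies in the generator of the expanded hypercube H_n. -/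
/-!
The permutations `σ` and `σ'` are the cycles `(i+1 … j)` and `(i … j)`, i.e. Mathlib's
`Fin.cycleIcc`. The only inversions of `cycleIcc a b` sit at position `b`, whose value `a` is
exceeded by all `b - a` entries `a+1, …, b` before it. Moreover
`cycleIcc a b = cycleIcc (a+1) b * swap a b`, so these two cycles are joined by an edge of the
expanded hypercube, and that edge contributes the transposition `(a b)` to its generator.
-/

open Equiv Fin

namespace Fin

variable {n : ℕ} {a b : Fin n}

theorem val_cycleIcc (k : Fin n) :
    (cycleIcc a b k : ℕ) = if k < a ∨ b < k then (k : ℕ) else if k = b then (a : ℕ) else k + 1 := by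
  have : NeZero n := NeZero.of_pos k.pos
  rcases lt_or_ge k a with hka | hak
  · simp [cycleIcc_of_lt hka, hka]
  rcases lt_or_ge b k with hbk | hkb
  · simp [cycleIcc_of_gt hbk, hbk]
  rw [cycleIcc_of_le_of_le hak hkb, if_neg (not_or.2 ⟨hak.not_gt, hkb.not_gt⟩)]
  split_ifs with hkb'
  · rfl
  · exact val_add_one_of_lt' (by have := lt_of_le_of_ne hkb hkb'; omega)

theorem eq_cycleIcc_of_val {σ : Perm (Fin n)}
    (hσ : ∀ k, (σ k : ℕ) = if k < a ∨ b < k then (k : ℕ) else if k = b then (a : ℕ) else k + 1) :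
    σ = cycleIcc a b := by
  ext k
  rw [hσ, val_cycleIcc]

theorem cycleIcc_eq_mul_swap {a' : Fin n} (hab : a < b) (ha' : (a' : ℕ) = a + 1) :
    cycleIcc a b = cycleIcc a' b * swap a b := by
  ext k
  rw [Perm.mul_apply, val_cycleIcc, swap_apply_def]
  rw [Fin.lt_def] at hab
  split_ifs <;> simp only [val_cycleIcc, Fin.lt_def, Fin.ext_iff] at * <;> split_ifs <;> omega

end Fin

theorem invj_cycleIcc {n : ℕ} {a b : Fin n} (k : Fin n) :
    Invj n k (cycleIcc a b) = if k = b then (b : ℕ) - a else 0 := by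
  unfold Invj
  split_ifs with hkb
  · subst hkb
    rw [← Fin.card_Ico]
    congr 1
    ext m
    simp only [Finset.mem_filter, Finset.mem_univ, true_and, Finset.mem_Ico, Fin.lt_def,
      Fin.le_def, val_cycleIcc, Fin.ext_iff]
    split_ifs <;> omega
  · rw [Finset.card_eq_zero, Finset.filter_eq_empty_iff]
    rintro m - ⟨hmk, hinv⟩
    simp only [Fin.lt_def, val_cycleIcc, Fin.ext_iff] at hmk hinv hkb
    split_ifs at hinv <;> omega

theorem exists_invj_dist_one_mul_swap {n : ℕ} {a b : Fin n} (hab : a < b) :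
    ∃ ρ ρ' : Perm (Fin n),
      (∑ m : Fin n, |(Invj n m ρ' : ℤ) - (Invj n m ρ : ℤ)| = 1) ∧ ρ' = ρ * swap a b := by
  let a' : Fin n := ⟨a + 1, lt_of_le_of_lt (Fin.lt_def.1 hab) b.isLt⟩
  refine ⟨cycleIcc a' b, cycleIcc a b, ?_, cycleIcc_eq_mul_swap hab rfl⟩
  rw [Finset.sum_eq_single_of_mem b (Finset.mem_univ b) fun m _ hmb => by
    simp [invj_cycleIcc, hmb]]
  simp only [invj_cycleIcc, ↓reduceIte, a']
  rw [Fin.lt_def] at hab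
  rw [abs_of_nonneg (by omega)]
  omega

/-- Positions and values are 0-indexed; an edge of `H_n` joins two permutations whose
inversion tables are at `ℓ¹`-distance `1`. -/
theorem every_transposition_in_hypercube_generator (n : ℕ) (i j : Fin n) (hij : i < j)
    (σ σ' : Equiv.Perm (Fin n))
    (hσ : ∀ k : Fin n, (σ k : ℕ) =
      if k ≤ i ∨ j < k then (k : ℕ) else if k = j then (i : ℕ) + 1 else (k : ℕ) + 1)
    (hσ' : ∀ k : Fin n, (σ' k : ℕ) =
      if k < i ∨ j < k then (k : ℕ) else if k = j then (i : ℕ) else (k : ℕ) + 1) :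
    (∀ k : Fin n, Invj n k σ = if k = j then (j : ℕ) - (i : ℕ) - 1 else 0) ∧
    (∀ k : Fin n, Invj n k σ' = if k = j then (j : ℕ) - (i : ℕ) else 0) ∧
    σ' = σ * Equiv.swap i j ∧
    (∀ a b : Fin n, a ≠ b → ∃ ρ ρ' : Equiv.Perm (Fin n),
      (∑ m : Fin n, |(Invj n m ρ' : ℤ) - (Invj n m ρ : ℤ)| = 1) ∧
      ρ' = ρ * Equiv.swap a b) := by
  let i' : Fin n := ⟨i + 1, lt_of_le_of_lt (Fin.lt_def.1 hij) j.isLt⟩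
  have hσ_eq : σ = cycleIcc i' j := eq_cycleIcc_of_val fun k => by
    simp only [hσ k, i', Fin.lt_def, Fin.le_def]
    split_ifs <;> omega
  have hσ'_eq : σ' = cycleIcc i j := eq_cycleIcc_of_val hσ'
  subst hσ_eq hσ'_eq
  refine ⟨fun k => by simp only [invj_cycleIcc, i', Nat.sub_sub], invj_cycleIcc,
    cycleIcc_eq_mul_swap hij rfl, fun a b hne => ?_⟩
  rcases hne.lt_or_gt with hab | hba
  · exact exists_invj_dist_one_mul_swap hab
  · simpa only [swap_comm] using exists_invj_dist_one_mul_swap hba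
end
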